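/- The function φ(u,s) = (√(1 − u + s²) + s)² / ((1 − u)²·√(1 − u + s²)), defined on the open set {(u,s) ∈ ℝ² : u < 1 and 1 − u + s² > 0}, satisfies the projective PDE (∗): φ₂₂ = 2(φ₁ − s·φ₁₂). -/

import Mathlib

/-- First partial derivative of `f = f(u,s)` with respect to `u`. -/
noncomputable def pd1 (f : ℝ → ℝ → ℝ) (u s : ℝ) : ℝ := deriv (fun t => f t s) u

/-- First partial derivative of `f = f(u,s)` with respect to `s`. -/
noncomputable def pd2 (f : ℝ → ℝ → ℝ) (u s : ℝ) : ℝ := deriv (f u) s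

/-- The defining function of the square metric in navigation-type form. -/
noncomputable def phi (u s : ℝ) : ℝ :=
  (Real.sqrt (1 - u + s ^ 2) + s) ^ 2 / ((1 - u) ^ 2 * Real.sqrt (1 - u + s ^ 2))


/-!
With `r = √(1 − u + s²)` one has `1 − u = (r + s)(r − s)`, so `φ = 1 / (r (r − s)²)` on `u < 1`.
Since `∂r/∂s = s/r` and `∂r/∂u = −1/(2r)`, all the partial derivatives in the PDE are rational
in `r` and `s`: `φ₂₂ = 3/r⁵`, `φ₁ = (3r − s)/(2r³(r − s)³)` and
`φ₁₂ = (8r² − 9rs + 3s²)/(2r⁵(r − s)³)`, and the PDE reduces to `(r − s)³ = r³ − 3r²s + 3rs² − s³`.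
-/

noncomputable def rad (u s : ℝ) : ℝ := √(1 - u + s ^ 2)

noncomputable def phi1 (u s : ℝ) : ℝ := (3 * rad u s - s) / (2 * rad u s ^ 3 * (rad u s - s) ^ 3)

noncomputable def phi2 (u s : ℝ) : ℝ := (2 * rad u s - s) / (rad u s ^ 3 * (rad u s - s) ^ 2)

section Rad

variable {u : ℝ} (s : ℝ)

lemma radicand_pos (hu : u < 1) : 0 < 1 - u + s ^ 2 :=
  add_pos_of_pos_of_nonneg (sub_pos.2 hu) (sq_nonneg s)

lemma rad_pos (hu : u < 1) : 0 < rad u s :=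
  Real.sqrt_pos.2 (radicand_pos s hu)

lemma abs_lt_rad (hu : u < 1) : |s| < rad u s := by
  rw [← Real.sqrt_sq_eq_abs]
  exact Real.sqrt_lt_sqrt (sq_nonneg s) (by linarith [radicand_pos s hu])

lemma rad_sub_pos (hu : u < 1) : 0 < rad u s - s :=
  sub_pos.2 (abs_lt.1 (abs_lt_rad s hu)).2

lemma one_sub_eq_rad_add_mul_rad_sub (hu : u < 1) : 1 - u = (rad u s + s) * (rad u s - s) := by
  have h : rad u s ^ 2 = 1 - u + s ^ 2 := Real.sq_sqrt (radicand_pos s hu).le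
  linear_combination -h

lemma phi_eq (hu : u < 1) : phi u s = (rad u s * (rad u s - s) ^ 2)⁻¹ := by
  have hsum : rad u s + s ≠ 0 := by linarith [(abs_lt.1 (abs_lt_rad s hu)).1]
  have hw := (rad_sub_pos s hu).ne'
  have hr := (rad_pos s hu).ne'
  rw [phi, show √(1 - u + s ^ 2) = rad u s from rfl, one_sub_eq_rad_add_mul_rad_sub s hu]
  field_simp

lemma hasDerivAt_rad_s (hu : u < 1) : HasDerivAt (rad u) (s / rad u s) s := by
  have h := ((hasDerivAt_pow 2 s).const_add (1 - u)).sqrt (radicand_pos s hu).ne'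
  refine h.congr_deriv ?_
  rw [rad]
  ring

lemma hasDerivAt_rad_u (hu : u < 1) :
    HasDerivAt (fun t => rad t s) (-1 / (2 * rad u s)) u :=
  (((hasDerivAt_id u).const_sub 1).add_const (s ^ 2)).sqrt (radicand_pos s hu).ne'

lemma hasDerivAt_phi_s (hu : u < 1) : HasDerivAt (phi u) (phi2 u s) s := by
  have hr := hasDerivAt_rad_s s hu
  have hw := (rad_sub_pos s hu).ne'
  have hr0 := (rad_pos s hu).ne'
  have H := (hr.mul ((hr.sub (hasDerivAt_id s)).pow 2)).inv (by simp [hw, hr0])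
  rw [show phi u = fun y => (rad u y * (rad u y - y) ^ 2)⁻¹ from funext fun y => phi_eq y hu]
  refine H.congr_deriv ?_
  simp only [phi2, Pi.mul_apply, Pi.sub_apply, Pi.pow_apply, id_eq]
  field_simp
  ring

lemma hasDerivAt_phi_u (hu : u < 1) : HasDerivAt (fun t => phi t s) (phi1 u s) u := by
  have hr := hasDerivAt_rad_u s hu
  have hw := (rad_sub_pos s hu).ne'
  have hr0 := (rad_pos s hu).ne'
  have H := (hr.mul ((hr.sub_const s).pow 2)).inv (by simp [hw, hr0])
  refine (H.congr_deriv ?_).congr_of_eventuallyEq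
    ((eventually_lt_nhds hu).mono fun t ht => phi_eq s ht)
  simp only [phi1, Pi.mul_apply, Pi.pow_apply]
  field_simp
  ring

lemma hasDerivAt_phi2_s (hu : u < 1) : HasDerivAt (phi2 u) (3 / rad u s ^ 5) s := by
  have hr := hasDerivAt_rad_s s hu
  have hw := (rad_sub_pos s hu).ne'
  have hr0 := (rad_pos s hu).ne'
  have H := ((hr.const_mul 2).sub (hasDerivAt_id s)).div
    ((hr.pow 3).mul ((hr.sub (hasDerivAt_id s)).pow 2)) (by simp [hw, hr0])
  refine H.congr_deriv ?_
  simp only [Pi.mul_apply, Pi.sub_apply, Pi.pow_apply, id_eq]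
  field_simp
  ring

lemma hasDerivAt_phi1_s (hu : u < 1) :
    HasDerivAt (phi1 u) ((8 * rad u s ^ 2 - 9 * rad u s * s + 3 * s ^ 2) /
      (2 * rad u s ^ 5 * (rad u s - s) ^ 3)) s := by
  have hr := hasDerivAt_rad_s s hu
  have hw := (rad_sub_pos s hu).ne'
  have hr0 := (rad_pos s hu).ne'
  have H := ((hr.const_mul 3).sub (hasDerivAt_id s)).div
    (((hr.pow 3).const_mul 2).mul ((hr.sub (hasDerivAt_id s)).pow 3)) (by simp [hw, hr0])
  refine H.congr_deriv ?_
  simp only [Pi.mul_apply, Pi.sub_apply, Pi.pow_apply, id_eq]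
  field_simp
  ring

end Rad

lemma rational_pde_identity {r s : ℝ} (hr : r ≠ 0) (hw : r - s ≠ 0) :
    3 / r ^ 5 = 2 * ((3 * r - s) / (2 * r ^ 3 * (r - s) ^ 3) -
      s * ((8 * r ^ 2 - 9 * r * s + 3 * s ^ 2) / (2 * r ^ 5 * (r - s) ^ 3))) := by
  field_simp
  ring

/-- `φ(u,s) = (√(1 − u + s²) + s)²/((1 − u)²·√(1 − u + s²))` satisfies the
projective PDE `φ₂₂ = 2(φ₁ − s·φ₁₂)` on `{(u,s) : u < 1, 1 − u + s² > 0}`. -/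
theorem stmt_2 : ∀ u s : ℝ, u < 1 → 0 < 1 - u + s ^ 2 →
    pd2 (pd2 phi) u s = 2 * (pd1 phi u s - s * pd2 (pd1 phi) u s) := by
  intro u s hu _
  have h2 : pd2 phi u = phi2 u := funext fun y => (hasDerivAt_phi_s y hu).deriv
  have h1 : pd1 phi u = phi1 u := funext fun y => (hasDerivAt_phi_u y hu).deriv
  rw [pd2, h2, pd2, h1, (hasDerivAt_phi2_s s hu).deriv, (hasDerivAt_phi1_s s hu).deriv]
  exact rational_pde_identity (rad_pos s hu).ne' (rad_sub_pos s hu).ne'
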